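/- For every positive integer j, sum_{r=j}^{⌊e·j⌋} (1 - ln(r/j))/r² ≤ 1/(e·j) + 1/j². -/

import Mathlib

/-!
The summand is `f'(r)` for `f x = log (x / j) / x`, and `f'` is antitone on `(0, e j]`: its
numerator `1 - log (x / j)` decreases and stays nonnegative there while `x²` grows. Hence, once the
term `r = j` (which is `1 / j²`) is split off, the rest of the sum is at most
`∫ x in j..N, f' x = f N - f j = f N` with `N = ⌊e j⌋`, and `f ≤ 1 / (e j)` on `(0, ∞)` because
`log t ≤ t / e`.
-/

open Real Set

theorem Real.log_le_div_exp_one {x : ℝ} (hx : 0 < x) : log x ≤ x / exp 1 := by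
  have h := log_le_sub_one_of_pos (div_pos hx (exp_pos 1))
  rw [log_div hx.ne' (exp_pos 1).ne', log_exp] at h
  linarith

theorem AntitoneOn.sum_Ioc_le_integral {f : ℝ → ℝ} {a b : ℕ} (hab : a ≤ b)
    (hf : AntitoneOn f (Icc a b)) : ∑ r ∈ Finset.Ioc a b, f r ≤ ∫ x in a..b, f x := by
  rw [← Finset.Ico_add_one_add_one_eq_Ioc, ← Finset.sum_Ico_add']
  exact hf.sum_le_integral_Ico hab

section
variable {c x : ℝ}

theorem hasDerivAt_log_div_div (hc : c ≠ 0) (hx : x ≠ 0) :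
    HasDerivAt (fun x ↦ log (x / c) / x) ((1 - log (x / c)) / x ^ 2) x := by
  have hlog : HasDerivAt (fun x ↦ log (x / c)) x⁻¹ x :=
    (((hasDerivAt_id' x).div_const c).log (div_ne_zero hx hc)).congr_deriv (by field_simp)
  exact (hlog.div (hasDerivAt_id' x) hx).congr_deriv (by field_simp)

theorem antitoneOn_one_sub_log_div_div_sq (hc : 0 < c) :
    AntitoneOn (fun x ↦ (1 - log (x / c)) / x ^ 2) (Ioc 0 (exp 1 * c)) := by
  intro x ⟨hx, _⟩ y ⟨hy, hye⟩ hxy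
  have hlog_y : log (y / c) ≤ 1 := by
    rw [← log_exp 1]
    exact log_le_log (by positivity) ((div_le_iff₀ hc).2 hye)
  have hlog_xy : log (x / c) ≤ log (y / c) := log_le_log (by positivity) (by gcongr)
  exact div_le_div₀ (by linarith) (by linarith) (by positivity) (by gcongr)

theorem log_div_div_le (hc : 0 < c) (hx : 0 < x) : log (x / c) / x ≤ 1 / (exp 1 * c) := by
  calc log (x / c) / x ≤ x / c / exp 1 / x := by
        gcongr; exact log_le_div_exp_one (by positivity)
    _ = 1 / (exp 1 * c) := by field_simp

theorem integral_one_sub_log_div_div_sq {b : ℝ} (hc : 0 < c) (hcb : c ≤ b) :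
    ∫ x in c..b, (1 - log (x / c)) / x ^ 2 = log (b / c) / b := by
  have hpos : ∀ x ∈ uIcc c b, 0 < x := fun x hx ↦ hc.trans_le (uIcc_of_le hcb ▸ hx).1
  rw [intervalIntegral.integral_eq_sub_of_hasDerivAt
    (fun x hx ↦ hasDerivAt_log_div_div hc.ne' (hpos x hx).ne')]
  · simp [hc.ne']
  · refine ContinuousOn.intervalIntegrable fun x hx ↦ ?_
    have := hpos x hx
    exact ContinuousAt.continuousWithinAt (by fun_prop (disch := positivity))
end

theorem stmt_5 (j : ℕ) (hj : 0 < j) :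
    ∑ r ∈ Finset.Icc j ⌊Real.exp 1 * j⌋₊,
        (1 - Real.log ((r : ℝ) / j)) / (r : ℝ) ^ 2 ≤
      1 / (Real.exp 1 * j) + 1 / (j : ℝ) ^ 2 := by
  set N := ⌊exp 1 * j⌋₊
  have hjR : (0 : ℝ) < j := by exact_mod_cast hj
  have hjN : j ≤ N := Nat.le_floor (le_mul_of_one_le_left hjR.le (one_le_exp zero_le_one))
  have hNe : (N : ℝ) ≤ exp 1 * j := Nat.floor_le (by positivity)
  have hjN' : (j : ℝ) ≤ N := by exact_mod_cast hjN
  have hanti : AntitoneOn (fun x ↦ (1 - log (x / j)) / x ^ 2) (Icc (j : ℝ) N) :=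
    (antitoneOn_one_sub_log_div_div_sq hjR).mono fun x hx ↦ ⟨hjR.trans_le hx.1, hx.2.trans hNe⟩
  rw [← Finset.Ioc_insert_left hjN, Finset.sum_insert Finset.left_notMem_Ioc, add_comm]
  refine add_le_add ?_ (by simp [hjR.ne'])
  calc _ ≤ ∫ x in (j : ℝ)..N, (1 - log (x / j)) / x ^ 2 := hanti.sum_Ioc_le_integral hjN
    _ = log (N / j) / N := integral_one_sub_log_div_div_sq hjR hjN'
    _ ≤ 1 / (exp 1 * j) := log_div_div_le hjR (hjR.trans_le hjN')
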